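/- arXiv:1401.7617 — 8 statements merged into one kernel-verified Lean document; each statement's English description precedes it below -/
import Mathlib

section
/- Suppose θ : ℝ² × [0,T) → ℝ is C¹ and u₂ : ℝ² × [0,T) → ℝ is continuous, and they satisfy ∂_t θ + θ ∂_{x₁}θ + u₂ ∂_{x₂}θ = 0 on ℝ² × [0,T). If θ is even in x₂ (θ(x₁,-x₂,t) = θ(x₁,x₂,t)) and u₂ is odd in x₂ (u₂(x₁,-x₂,t) = -u₂(x₁,x₂,t)), then u₂(x₁,0,t) = 0 for all x₁ and t, and the restriction v(x₁,t) := θ(x₁,0,t) is a C¹ solution of the inviscid Burgers equation ∂_t v + v ∂_{x₁} v = 0 on ℝ × [0,T). -/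
open Set

/-- In the active scalar model (where `u₁ = θ`), even symmetry of `θ` in `x₂` and odd
symmetry of `u₂` in `x₂` force `u₂ = 0` on the `x₁`-axis, and the restriction
`v(x₁,t) = θ(x₁,0,t)` is a C¹ solution of the inviscid Burgers equation. -/
theorem restriction_to_axis_solves_burgers
    (T : ℝ) (θ u₂ : ℝ → ℝ → ℝ → ℝ)
    (hθ : ContDiffOn ℝ 1 (fun p : ℝ × ℝ × ℝ => θ p.1 p.2.1 p.2.2)
      (univ ×ˢ univ ×ˢ Ico 0 T))
    (hu₂ : ContinuousOn (fun p : ℝ × ℝ × ℝ => u₂ p.1 p.2.1 p.2.2)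
      (univ ×ˢ univ ×ˢ Ico 0 T))
    (hpde : ∀ x₁ x₂ t, t ∈ Ico 0 T →
      derivWithin (fun s => θ x₁ x₂ s) (Ico 0 T) t
        + θ x₁ x₂ t * deriv (fun y => θ y x₂ t) x₁
        + u₂ x₁ x₂ t * deriv (fun y => θ x₁ y t) x₂ = 0)
    (heven : ∀ x₁ x₂ t, t ∈ Ico 0 T → θ x₁ (-x₂) t = θ x₁ x₂ t)
    (hodd : ∀ x₁ x₂ t, t ∈ Ico 0 T → u₂ x₁ (-x₂) t = -u₂ x₁ x₂ t) :
    (∀ x₁ t, t ∈ Ico 0 T → u₂ x₁ 0 t = 0) ∧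
    ContDiffOn ℝ 1 (fun p : ℝ × ℝ => θ p.1 0 p.2) (univ ×ˢ Ico 0 T) ∧
    (∀ x₁ t, t ∈ Ico 0 T →
      derivWithin (fun s => θ x₁ 0 s) (Ico 0 T) t
        + θ x₁ 0 t * deriv (fun y => θ y 0 t) x₁ = 0) := by
  refine ⟨fun x₁ t ht => ?_, ?_, fun x₁ t ht => ?_⟩
  · have h := hodd x₁ 0 t ht
    simp only [neg_zero] at h
    linarith
  · have hg : ContDiff ℝ 1 (fun p : ℝ × ℝ => (p.1, (0 : ℝ), p.2)) := by
      exact ContDiff.prodMk contDiff_fst (ContDiff.prodMk contDiff_const contDiff_snd)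
    have := hθ.comp (s := univ ×ˢ Ico 0 T) hg.contDiffOn (fun p hp => by
      simp only [mem_prod, mem_univ, true_and] at hp ⊢
      exact hp)
    exact this
  · have hder : deriv (fun y => θ x₁ y t) 0 = 0 := by
      have h1 : deriv (fun y => θ x₁ (-y) t) 0 = -deriv (fun y => θ x₁ y t) (-0) := by
        exact deriv_comp_neg (fun y => θ x₁ y t) 0
      have h2 : (fun y => θ x₁ (-y) t) = (fun y => θ x₁ y t) := by
        funext y; exact heven x₁ y t ht
      rw [h2, neg_zero] at h1
      linarith
    have h := hpde x₁ 0 t ht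
    rw [hder] at h
    linarith
end

section
/- Let v : ℝ × [0,T] → ℝ be a C¹ solution of the inviscid Burgers equation ∂_t v + v ∂_x v = 0 with initial data v₀(x) = v(x,0). If there exists a ∈ ℝ with v₀'(a) < 0, then T < -1/v₀'(a). In particular, if v₀' is negative somewhere, no C¹ solution exists for all time. -/
open Set

/-- A C¹ solution of the inviscid Burgers equation on `ℝ × [0,T]` whose initial data has
negative derivative somewhere satisfies `T < -1/v₀'(a)`: finite-time blow-up. -/
theorem burgers_finite_time_blowup
    (T : ℝ) (hT : 0 ≤ T) (v : ℝ → ℝ → ℝ)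
    (hv : ContDiffOn ℝ 1 (fun p : ℝ × ℝ => v p.1 p.2) (univ ×ˢ Icc 0 T))
    (hpde : ∀ x t, t ∈ Icc 0 T →
      derivWithin (fun s => v x s) (Icc 0 T) t
        + v x t * deriv (fun y => v y t) x = 0)
    (a : ℝ) (ha : deriv (fun x => v x 0) a < 0) :
    T < -1 / deriv (fun x => v x 0) a := by
  set c := deriv (fun x => v x 0) a with hc
  have hcpos : (0:ℝ) < -1 / c := div_pos_of_neg_of_neg (by norm_num) ha
  rcases eq_or_lt_of_le hT with hT0 | hT0
  · rw [← hT0]; exact hcpos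
  set S : Set (ℝ × ℝ) := univ ×ˢ Icc 0 T with hS
  set V : ℝ × ℝ → ℝ := fun p => v p.1 p.2 with hV
  have hSu : UniqueDiffOn ℝ S := uniqueDiffOn_univ.prod (uniqueDiffOn_Icc hT0)
  set L : ℝ × ℝ → (ℝ × ℝ) →L[ℝ] ℝ := fun p => fderivWithin ℝ V S p with hL
  have hdiff : ∀ p ∈ S, HasFDerivWithinAt V (L p) S p := fun p hp =>
    ((hv.differentiableOn one_ne_zero) p hp).hasFDerivWithinAt
  -- the partial derivative in x is a genuine derivative
  have hBx : ∀ x t, t ∈ Icc 0 T → HasDerivAt (fun y => v y t) (L (x, t) (1, 0)) x := by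
    intro x t ht
    have hι : HasFDerivAt (fun y : ℝ => ((y, t) : ℝ × ℝ))
        ((ContinuousLinearMap.id ℝ ℝ).prod (0 : ℝ →L[ℝ] ℝ)) x :=
      HasFDerivAt.prodMk (hasFDerivAt_id x) (hasFDerivAt_const t x)
    have hmaps : MapsTo (fun y : ℝ => ((y, t) : ℝ × ℝ)) univ S := fun y _ => ⟨mem_univ y, ht⟩
    have hcomp := HasFDerivWithinAt.comp x (hdiff (x, t) ⟨mem_univ x, ht⟩)
      (hι.hasFDerivWithinAt) hmaps
    rw [hasFDerivWithinAt_univ] at hcomp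
    have := hcomp.hasDerivAt
    exact this
  -- the partial derivative in t is a derivative within [0,T]
  have hBt : ∀ x t, t ∈ Icc 0 T →
      HasDerivWithinAt (fun s => v x s) (L (x, t) (0, 1)) (Icc 0 T) t := by
    intro x t ht
    have hι : HasFDerivWithinAt (fun s : ℝ => ((x, s) : ℝ × ℝ))
        ((0 : ℝ →L[ℝ] ℝ).prod (ContinuousLinearMap.id ℝ ℝ)) (Icc 0 T) t :=
      (HasFDerivAt.prodMk (hasFDerivAt_const x t) (hasFDerivAt_id t)).hasFDerivWithinAt
    have hmaps : MapsTo (fun s : ℝ => ((x, s) : ℝ × ℝ)) (Icc 0 T) S :=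
      fun s hs => ⟨mem_univ x, hs⟩
    have hcomp := HasFDerivWithinAt.comp t (hdiff (x, t) ⟨mem_univ x, ht⟩) hι hmaps
    have := hcomp.hasDerivWithinAt
    exact this
  -- restate the PDE in terms of `L`
  have hpde' : ∀ x t, t ∈ Icc 0 T →
      L (x, t) (0, 1) = -(v x t * L (x, t) (1, 0)) := by
    intro x t ht
    have h1 := (hBt x t ht).derivWithin ((uniqueDiffOn_Icc hT0) t ht)
    have h2 := (hBx x t ht).deriv
    have h3 := hpde x t ht
    rw [h1, h2] at h3
    linarith
  have hLc : ContinuousOn L S := hv.continuousOn_fderivWithin hSu le_rfl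
  -- the solution is constant along characteristics
  have key : ∀ x, ∀ t ∈ Icc 0 T, v (x + t * v x 0) t = v x 0 := by
    intro x
    set cx := v x 0 with hcx
    set γ : ℝ → ℝ × ℝ := fun t => (x + t * cx, t) with hγ
    have hγmem : ∀ t ∈ Icc 0 T, γ t ∈ S := fun t ht => ⟨mem_univ _, ht⟩
    have hγc : Continuous γ := by fun_prop
    have hγd : ∀ t ∈ Icc 0 T, HasDerivWithinAt γ (cx, 1) (Icc 0 T) t := by
      intro t ht
      have h1 : HasDerivAt (fun t : ℝ => x + t * cx) cx t := by
        simpa using ((hasDerivAt_id t).mul_const cx).const_add x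
      exact ((HasDerivAt.prodMk h1 (hasDerivAt_id t)).hasDerivWithinAt)
    set g : ℝ → ℝ := fun t => V (γ t) - cx with hg
    have hgd : ∀ t ∈ Icc 0 T,
        HasDerivWithinAt g (-(g t) * L (γ t) (1, 0)) (Icc 0 T) t := by
      intro t ht
      have hcomp := (hdiff (γ t) (hγmem t ht)).comp_hasDerivWithinAt t (hγd t ht)
        (fun s hs => hγmem s hs)
      have hval : L (γ t) (cx, 1) = -(g t) * L (γ t) (1, 0) := by
        have hsplit : ((cx, 1) : ℝ × ℝ) = cx • ((1, 0) : ℝ × ℝ) + ((0, 1) : ℝ × ℝ) := by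
          simp [Prod.ext_iff]
        rw [hsplit, map_add, map_smul]
        have := hpde' (x + t * cx) t ht
        have hVγ : V (γ t) = v (x + t * cx) t := rfl
        simp only [hγ] at *
        rw [this]
        simp only [hg, hVγ, smul_eq_mul]
        ring
      rw [hval] at hcomp
      exact hcomp.sub_const cx
    have hgc : ContinuousOn g (Icc 0 T) :=
      ((hv.continuousOn.comp hγc.continuousOn hγmem).sub continuousOn_const)
    have hLγc : ContinuousOn (fun t => ‖L (γ t)‖) (Icc 0 T) :=
      (hLc.comp hγc.continuousOn hγmem).norm
    obtain ⟨t₀, ht₀, hKmax'⟩ := isCompact_Icc.exists_isMaxOn ⟨0, left_mem_Icc.2 hT⟩ hLγc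
    have hKmax : ∀ t ∈ Icc 0 T, ‖L (γ t)‖ ≤ ‖L (γ t₀)‖ := fun t ht => hKmax' ht
    set K := ‖L (γ t₀)‖ with hK
    have hg0 : g 0 = 0 := by simp [hg, hγ, hV, hcx]
    have hnorm10 : ‖((1 : ℝ), (0 : ℝ))‖ = 1 := by
      simp [Prod.norm_def]
    have hbound : ∀ t ∈ Ico 0 T, ‖-(g t) * L (γ t) (1, 0)‖ ≤ K * ‖g t‖ + 0 := by
      intro t ht
      rw [add_zero, norm_mul, norm_neg]
      have h1 : ‖L (γ t) (1, 0)‖ ≤ K := by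
        calc ‖L (γ t) ((1 : ℝ), (0 : ℝ))‖ ≤ ‖L (γ t)‖ * ‖((1:ℝ), (0:ℝ))‖ :=
              (L (γ t)).le_opNorm _
          _ = ‖L (γ t)‖ := by rw [hnorm10, mul_one]
          _ ≤ K := hKmax t (Ico_subset_Icc_self ht)
      calc ‖g t‖ * ‖L (γ t) (1, 0)‖ ≤ ‖g t‖ * K :=
            mul_le_mul_of_nonneg_left h1 (norm_nonneg _)
        _ = K * ‖g t‖ := mul_comm _ _
    have hgron := norm_le_gronwallBound_of_norm_deriv_right_le (δ := 0) (K := K) (ε := 0) hgc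
      (fun t ht => (hgd t (Ico_subset_Icc_self ht)).mono_of_mem_nhdsWithin
        (Icc_mem_nhdsGE_of_mem ht)) (by simp [hg0]) hbound
    intro t ht
    have := hgron t ht
    rw [gronwallBound_ε0_δ0] at this
    have : g t = 0 := by
      have h := norm_nonneg (g t)
      have := le_antisymm this (norm_nonneg (g t))
      simpa using this.symm ▸ norm_eq_zero.mp this
    simpa [hg, hγ, hV, hcx, sub_eq_zero] using this
  -- differentiate the characteristic identity in x
  have hkey2 : ∀ t ∈ Icc 0 T, ∃ D : ℝ, c = D * (1 + t * c) := by
    intro t ht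
    have h0T : (0:ℝ) ∈ Icc 0 T := left_mem_Icc.2 hT
    have hv₀ : HasDerivAt (fun x => v x 0) c a := by
      have := hBx a 0 h0T
      rwa [hc, this.deriv]
    have hψ : HasDerivAt (fun x => x + t * v x 0) (1 + t * c) a := by
      exact (hasDerivAt_id a).add ((hv₀.const_mul t))
    set b := a + t * v a 0 with hb
    have houter : HasDerivAt (fun y => v y t) (L (b, t) (1, 0)) b := hBx b t ht
    have hcompd : HasDerivAt (fun x => v (x + t * v x 0) t)
        (L (b, t) (1, 0) * (1 + t * c)) a := by
      have := HasDerivAt.comp a houter hψ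
      exact this
    have hfun : (fun x => v (x + t * v x 0) t) = fun x => v x 0 :=
      funext fun x => key x t ht
    rw [hfun] at hcompd
    exact ⟨L (b, t) (1, 0), hv₀.unique hcompd⟩
  -- no zero of 1 + t c on [0,T]
  have hpos : 0 < 1 + T * c := by
    by_contra h
    push_neg at h
    have hcont : ContinuousOn (fun t : ℝ => 1 + t * c) (Icc 0 T) := by fun_prop
    have hI := intermediate_value_Icc' hT hcont
    have h0mem : (0:ℝ) ∈ Icc (1 + T * c) (1 + 0 * c) := ⟨h, by norm_num⟩
    obtain ⟨t, ht, htz⟩ := hI h0mem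
    obtain ⟨D, hD⟩ := hkey2 t ht
    have htz' : 1 + t * c = 0 := htz
    rw [htz', mul_zero] at hD
    exact absurd hD (ne_of_lt ha)
  rw [neg_div]
  rw [lt_neg]
  rw [div_lt_iff_of_neg ha]
  linarith
end

section
/- The 2D active scalar model develops a finite-time singularity from smooth data: there is no T ≥ 1 and C² function ψ : ℝ² × [0,T] → ℝ, odd in x₂ (ψ(x₁,-x₂,t) = -ψ(x₁,x₂,t)), such that θ := -∂_{x₂}ψ is C¹, u := ∇^⊥ψ, the transport equation ∂_t θ + u·∇θ = 0 holds on ℝ² × [0,T], and the initial data is ψ(x,0) = -cos(x₁) sin(x₂) (equivalently θ(x,0) = cos(x₁) cos(x₂)). -/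
open Set

/-- The 2D active scalar model `∂ₜθ + u·∇θ = 0`, `u = ∇^⊥ψ`, `θ = -∂₂ψ` develops a
finite-time singularity from the smooth, odd (in `x₂`) initial stream function
`ψ₀(x) = -cos x₁ sin x₂`: there is no C² solution on `ℝ² × [0,T]` with `T ≥ 1`. -/
theorem active_scalar_finite_time_singularity :
    ¬ ∃ (T : ℝ) (ψ : ℝ → ℝ → ℝ → ℝ),
      1 ≤ T ∧
      ContDiffOn ℝ 2 (fun p : ℝ × ℝ × ℝ => ψ p.1 p.2.1 p.2.2)
        (univ ×ˢ univ ×ˢ Icc 0 T) ∧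
      -- ψ odd in x₂
      (∀ x₁ x₂ t, t ∈ Icc 0 T → ψ x₁ (-x₂) t = -ψ x₁ x₂ t) ∧
      -- θ := -∂₂ψ is C¹
      ContDiffOn ℝ 1 (fun p : ℝ × ℝ × ℝ => -deriv (fun y => ψ p.1 y p.2.2) p.2.1)
        (univ ×ˢ univ ×ˢ Icc 0 T) ∧
      -- transport equation ∂ₜθ + u₁ ∂₁θ + u₂ ∂₂θ = 0 with u = ∇^⊥ψ, so u₁ = θ
      (∀ x₁ x₂ t, t ∈ Icc 0 T →
        derivWithin (fun s => -deriv (fun y => ψ x₁ y s) x₂) (Icc 0 T) t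
          + (-deriv (fun y => ψ x₁ y t) x₂)
            * deriv (fun z => -deriv (fun y => ψ z y t) x₂) x₁
          + (deriv (fun z => ψ z x₂ t) x₁)
            * deriv (fun y => -deriv (fun w => ψ x₁ w t) y) x₂ = 0) ∧
      -- initial data
      (∀ x₁ x₂, ψ x₁ x₂ 0 = -(Real.cos x₁ * Real.sin x₂)) := by
  rintro ⟨T, ψ, hT, -, hodd, hθC1, hpde, hinit⟩
  have hT0 : (0:ℝ) < T := lt_of_lt_of_le one_pos hT
  set S : Set (ℝ × ℝ) := univ ×ˢ Icc 0 T with hSdef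
  -- trace of θ on the axis x₂ = 0, as a function of (x₁, t)
  set Θ : ℝ × ℝ → ℝ := fun p => -deriv (fun y => ψ p.1 y p.2) 0 with hΘdef
  have hmemS : ∀ (x t : ℝ), t ∈ Icc 0 T → (x, t) ∈ S := fun x t ht =>
    ⟨mem_univ _, ht⟩
  -- Θ is C¹ on S
  have hΘC1 : ContDiffOn ℝ 1 Θ S := by
    have hin : ContDiff ℝ 1 (fun p : ℝ × ℝ => (p.1, (0:ℝ), p.2)) :=
      contDiff_fst.prodMk (contDiff_const.prodMk contDiff_snd)
    have hmap : MapsTo (fun p : ℝ × ℝ => (p.1, (0:ℝ), p.2)) S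
        (univ ×ˢ univ ×ˢ Icc 0 T) := fun p hp => ⟨mem_univ _, mem_univ _, hp.2⟩
    exact hθC1.comp hin.contDiffOn hmap
  have hUD : UniqueDiffOn ℝ S := uniqueDiffOn_univ.prod (uniqueDiffOn_Icc hT0)
  have hdiff : DifferentiableOn ℝ Θ S := hΘC1.differentiableOn one_ne_zero
  set L : ℝ × ℝ → (ℝ × ℝ) →L[ℝ] ℝ := fun p => fderivWithin ℝ Θ S p with hLdef
  have hF : ∀ (x t : ℝ), t ∈ Icc 0 T → HasFDerivWithinAt Θ (L (x, t)) S (x, t) :=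
    fun x t ht => (hdiff (x, t) (hmemS x t ht)).hasFDerivWithinAt
  -- partial derivative in x
  have hx : ∀ (x t : ℝ), t ∈ Icc 0 T →
      HasDerivAt (fun z => -deriv (fun y => ψ z y t) 0) (L (x, t) (1, 0)) x := by
    intro x t ht
    have hinner : HasDerivAt (fun z : ℝ => ((z, t) : ℝ × ℝ)) ((1:ℝ), (0:ℝ)) x :=
      (hasDerivAt_id x).prodMk (hasDerivAt_const x t)
    have h2 := (hF x t ht).comp_hasDerivWithinAt x (hinner.hasDerivWithinAt (s := univ))
      (fun z _ => hmemS z t ht)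
    rw [hasDerivWithinAt_univ] at h2
    exact h2
  -- partial derivative in t
  have hts : ∀ (x t : ℝ), t ∈ Icc 0 T →
      HasDerivWithinAt (fun s => -deriv (fun y => ψ x y s) 0) (L (x, t) (0, 1))
        (Icc 0 T) t := by
    intro x t ht
    have hinner : HasDerivWithinAt (fun s : ℝ => ((x, s) : ℝ × ℝ)) ((0:ℝ), (1:ℝ))
        (Icc 0 T) t :=
      ((hasDerivAt_const t x).prodMk (hasDerivAt_id t)).hasDerivWithinAt
    exact (hF x t ht).comp_hasDerivWithinAt t hinner (fun s hs => hmemS x s hs)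
  -- the PDE on the axis: Burgers equation
  have hkey : ∀ (x t : ℝ), t ∈ Icc 0 T →
      L (x, t) (0, 1) = -(Θ (x, t) * L (x, t) (1, 0)) := by
    intro x t ht
    have h0 : (fun z : ℝ => ψ z 0 t) = fun _ => (0:ℝ) := by
      funext z
      have h := hodd z 0 t ht
      rw [neg_zero] at h
      linarith
    have hp := hpde x 0 t ht
    rw [h0] at hp
    rw [deriv_const, zero_mul, add_zero] at hp
    have e1 : derivWithin (fun s => -deriv (fun y => ψ x y s) 0) (Icc 0 T) t
        = L (x, t) (0, 1) := (hts x t ht).derivWithin (uniqueDiffOn_Icc hT0 t ht)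
    have e2 : deriv (fun z => -deriv (fun y => ψ z y t) 0) x = L (x, t) (1, 0) :=
      (hx x t ht).deriv
    rw [e1, e2] at hp
    show L (x, t) (0, 1) = -(-deriv (fun y => ψ x y t) 0 * L (x, t) (1, 0))
    linarith
  -- linear expansion of L p (c, 1)
  have hexp : ∀ (p : ℝ × ℝ) (c : ℝ), L p (c, 1) = c * L p (1, 0) + L p (0, 1) := by
    intro p c
    have h : ((c, 1) : ℝ × ℝ) = c • ((1:ℝ), (0:ℝ)) + ((0:ℝ), (1:ℝ)) := by
      simp [Prod.ext_iff]
    rw [h, map_add, map_smul, smul_eq_mul]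
  -- initial data for Θ
  have hinit' : ∀ x : ℝ, -deriv (fun y => ψ x y 0) 0 = Real.cos x := by
    intro x
    have h : (fun y => ψ x y 0) = fun y => -(Real.cos x * Real.sin y) :=
      funext fun y => hinit x y
    rw [h]
    have hd : HasDerivAt (fun y => -(Real.cos x * Real.sin y))
        (-(Real.cos x * Real.cos 0)) 0 := ((Real.hasDerivAt_sin 0).const_mul _).neg
    rw [hd.deriv]
    simp
  -- characteristics: Θ (a + cos a * t, t) = cos a for t ∈ [0,1]
  have main : ∀ a : ℝ, -deriv (fun y => ψ (a + Real.cos a) y 1) 0 = Real.cos a := by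
    intro a
    set c : ℝ := Real.cos a with hcdef
    -- g t = Θ (a + c t, t)
    set g : ℝ → ℝ := fun t => -deriv (fun y => ψ (a + c * t) y t) 0 with hgdef
    have hsub : Icc (0:ℝ) 1 ⊆ Icc 0 T := Icc_subset_Icc le_rfl hT
    have hg' : ∀ t ∈ Icc (0:ℝ) T,
        HasDerivWithinAt g ((c - g t) * L (a + c * t, t) (1, 0)) (Icc 0 T) t := by
      intro t ht
      have hj : HasDerivWithinAt (fun s : ℝ => ((a + c * s, s) : ℝ × ℝ)) ((c, 1) : ℝ × ℝ)
          (Icc 0 T) t := by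
        have h1 : HasDerivAt (fun s : ℝ => a + c * s) (0 + c * 1) t :=
          (hasDerivAt_const t a).add ((hasDerivAt_id t).const_mul c)
        have h2 : HasDerivAt (fun s : ℝ => ((a + c * s, s) : ℝ × ℝ)) ((0 + c * 1, 1) : ℝ × ℝ) t :=
          h1.prodMk (hasDerivAt_id t)
        simpa using h2.hasDerivWithinAt
      have h3 : HasDerivWithinAt g (L (a + c * t, t) (c, 1)) (Icc 0 T) t := by
        have h4 := (hF (a + c * t) t ht).comp_hasDerivWithinAt
          (f := fun s : ℝ => ((a + c * s, s) : ℝ × ℝ)) t hj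
          (fun s hs => hmemS _ s hs)
        exact h4
      have h5 : L (a + c * t, t) (c, 1) = (c - g t) * L (a + c * t, t) (1, 0) := by
        rw [hexp, hkey (a + c * t) t ht]
        have : Θ (a + c * t, t) = g t := rfl
        rw [this]; ring
      rwa [h5] at h3
    -- continuity of g on [0,1]
    have hgc : ContinuousOn g (Icc 0 1) :=
      (fun t ht => ((hg' t (hsub ht)).continuousWithinAt).mono hsub)
    -- bound on the gradient along the characteristic
    obtain ⟨K, hK⟩ : ∃ K : ℝ, ∀ t ∈ Icc (0:ℝ) 1, ‖L (a + c * t, t)‖ ≤ K := by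
      have hLc : ContinuousOn (fun p => L p) S :=
        hΘC1.continuousOn_fderivWithin hUD le_rfl
      have hjc : ContinuousOn (fun t : ℝ => ((a + c * t, t) : ℝ × ℝ)) (Icc 0 1) :=
        (Continuous.prodMk (continuous_const.add (continuous_const.mul continuous_id)) continuous_id).continuousOn
      have hmap : MapsTo (fun t : ℝ => ((a + c * t, t) : ℝ × ℝ)) (Icc 0 1) S :=
        fun t ht => hmemS _ t (hsub ht)
      have hnc : ContinuousOn (fun t : ℝ => L (a + c * t, t)) (Icc 0 1) :=
        hLc.comp hjc hmap
      obtain ⟨K, hK⟩ := isCompact_Icc.exists_bound_of_continuousOn hnc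
      exact ⟨K, fun t ht => hK t ht⟩
    have hK0 : ∀ p : ℝ × ℝ, |L p (1, 0)| ≤ ‖L p‖ := by
      intro p
      have := (L p).le_opNorm ((1:ℝ), (0:ℝ))
      have hn : ‖(((1:ℝ), (0:ℝ)) : ℝ × ℝ)‖ = 1 := by
        simp [Prod.norm_def]
      rw [hn, mul_one] at this
      simpa using this
    -- Grönwall on f = g - c
    have hf0 : g 0 = c := by
      have : g 0 = -deriv (fun y => ψ (a + c * 0) y 0) 0 := rfl
      rw [this, hinit']
      simp [hcdef]
    have hgron := norm_le_gronwallBound_of_norm_deriv_right_le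
      (f := fun t => g t - c) (f' := fun t => (c - g t) * L (a + c * t, t) (1, 0))
      (δ := 0) (K := K) (ε := 0) (a := 0) (b := 1)
      (hgc.sub continuousOn_const)
      (fun t ht => by
        have h6 := ((hg' t (hsub (Ico_subset_Icc_self ht))).sub_const c)
        exact h6.mono_of_mem_nhdsWithin
          (Icc_mem_nhdsGE_of_mem ⟨ht.1, lt_of_lt_of_le ht.2 hT⟩))
      (by show ‖g 0 - c‖ ≤ 0; rw [hf0]; simp)
      (fun t ht => by
        have h7 : |c - g t| = ‖g t - c‖ := by
          rw [Real.norm_eq_abs, abs_sub_comm]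
        have h8 : ‖(c - g t) * L (a + c * t, t) (1, 0)‖
            = |c - g t| * |L (a + c * t, t) (1, 0)| := by
          rw [Real.norm_eq_abs, abs_mul]
        rw [h8, h7, add_zero, mul_comm K _]
        refine mul_le_mul_of_nonneg_left ?_ (norm_nonneg _)
        exact le_trans (hK0 _) (hK t (Ico_subset_Icc_self ht)))
    have h9 := hgron 1 ⟨zero_le_one, le_rfl⟩
    rw [sub_zero, gronwallBound_ε0_δ0] at h9
    have h10 : g 1 = c := by
      have := norm_nonneg (g 1 - c)
      have h11 : ‖g 1 - c‖ = 0 := le_antisymm h9 this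
      rw [norm_eq_zero, sub_eq_zero] at h11
      exact h11
    have h12 : g 1 = -deriv (fun y => ψ (a + c * 1) y 1) 0 := rfl
    rw [h12, mul_one] at h10
    exact h10
  -- contradiction by differentiating a ↦ Θ(a + cos a, 1) = cos a at a = π/2
  have h1T : (1:ℝ) ∈ Icc (0:ℝ) T := ⟨zero_le_one, hT⟩
  set b : ℝ := Real.pi / 2 with hbdef
  have hinner : HasDerivAt (fun x : ℝ => ((x + Real.cos x, (1:ℝ)) : ℝ × ℝ))
      ((1 - Real.sin b, (0:ℝ)) : ℝ × ℝ) b := by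
    have h1 : HasDerivAt (fun x : ℝ => x + Real.cos x) (1 + -Real.sin b) b :=
      (hasDerivAt_id b).add (Real.hasDerivAt_cos b)
    have h2 : HasDerivAt (fun x : ℝ => ((x + Real.cos x, (1:ℝ)) : ℝ × ℝ))
        ((1 + -Real.sin b, (0:ℝ)) : ℝ × ℝ) b := h1.prodMk (hasDerivAt_const b (1:ℝ))
    simpa [sub_eq_add_neg] using h2
  have hcomp : HasDerivAt (fun x : ℝ => -deriv (fun y => ψ (x + Real.cos x) y 1) 0)
      (L (b + Real.cos b, 1) (1 - Real.sin b, 0)) b := by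
    have h2 := (hF (b + Real.cos b) 1 h1T).comp_hasDerivWithinAt b
      (hinner.hasDerivWithinAt (s := univ)) (fun x _ => hmemS _ 1 h1T)
    rw [hasDerivWithinAt_univ] at h2
    exact h2
  have hEq : (fun x : ℝ => -deriv (fun y => ψ (x + Real.cos x) y 1) 0)
      = fun x => Real.cos x := funext main
  rw [hEq] at hcomp
  have huniq := hcomp.unique (Real.hasDerivAt_cos b)
  have hsb : Real.sin b = 1 := Real.sin_pi_div_two
  have hz : ((1 - Real.sin b, (0:ℝ)) : ℝ × ℝ) = 0 := by
    rw [hsb]; simp [Prod.ext_iff]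
  rw [hz, map_zero, hsb] at huniq
  norm_num at huniq
end

section
/- For any C¹ function θ₀ : ℝ → ℝ, the functions ψ(x,t) = x₂²/2 - x₁x₂, u(x,t) = (x₁ - x₂, -x₂), ω(x,t) = 1, θ(x,t) = θ₀(e^t x₂) form a solution of the 2D Boussinesq equations on the half-plane {x₂ > 0} × (0,∞): u = ∇^⊥ψ, Δψ = ω, ∂_t ω + u·∇ω = ∂_{x₁}θ, and ∂_t θ + u·∇θ = 0. -/
open Set

/-- The explicit functions `ψ = x₂²/2 - x₁x₂`, `u = (x₁ - x₂, -x₂)`, `ω = 1`,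
`θ = θ₀(eᵗ x₂)` solve the inviscid 2D Boussinesq equations on `{x₂ > 0} × (0,∞)`. -/
theorem boussinesq_wedge_explicit_solution
    (θ₀ : ℝ → ℝ) (hθ₀ : ContDiff ℝ 1 θ₀)
    (ψ u₁ u₂ ω θ : ℝ → ℝ → ℝ → ℝ)
    (hψ : ψ = fun x₁ x₂ _t => x₂ ^ 2 / 2 - x₁ * x₂)
    (hu₁ : u₁ = fun x₁ x₂ _t => x₁ - x₂)
    (hu₂ : u₂ = fun _x₁ x₂ _t => -x₂)
    (hω : ω = fun _x₁ _x₂ _t => (1 : ℝ))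
    (hθ : θ = fun _x₁ x₂ t => θ₀ (Real.exp t * x₂)) :
    ∀ x₁ x₂ t : ℝ, 0 < x₂ → 0 < t →
      -- u = ∇^⊥ψ
      (u₁ x₁ x₂ t = -deriv (fun y => ψ x₁ y t) x₂) ∧
      (u₂ x₁ x₂ t = deriv (fun y => ψ y x₂ t) x₁) ∧
      -- Δψ = ω
      (deriv (deriv (fun y => ψ y x₂ t)) x₁
        + deriv (deriv (fun y => ψ x₁ y t)) x₂ = ω x₁ x₂ t) ∧
      -- ∂ₜω + u·∇ω = ∂₁θ
      (deriv (fun s => ω x₁ x₂ s) t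
        + u₁ x₁ x₂ t * deriv (fun y => ω y x₂ t) x₁
        + u₂ x₁ x₂ t * deriv (fun y => ω x₁ y t) x₂
        = deriv (fun y => θ y x₂ t) x₁) ∧
      -- ∂ₜθ + u·∇θ = 0
      (deriv (fun s => θ x₁ x₂ s) t
        + u₁ x₁ x₂ t * deriv (fun y => θ y x₂ t) x₁
        + u₂ x₁ x₂ t * deriv (fun y => θ x₁ y t) x₂ = 0) := by
  subst hψ hu₁ hu₂ hω hθ
  intro x₁ x₂ t _ _
  have hθ₀d : Differentiable ℝ θ₀ := hθ₀.differentiable one_ne_zero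
  set d := deriv θ₀ (Real.exp t * x₂) with hd
  have hθ₀' : HasDerivAt θ₀ d (Real.exp t * x₂) := (hθ₀d _).hasDerivAt
  -- ψ derivatives
  have h1 : ∀ a : ℝ, HasDerivAt (fun y : ℝ => y ^ 2 / 2 - x₁ * y) (a - x₁) a := by
    intro a
    have := (((hasDerivAt_pow 2 a).div_const 2).sub ((hasDerivAt_id a).const_mul x₁))
    exact this.congr_deriv (by ring)
  have h2 : ∀ a : ℝ, HasDerivAt (fun y : ℝ => x₂ ^ 2 / 2 - y * x₂) (-x₂) a := by
    intro a
    exact ((hasDerivAt_const a (x₂ ^ 2 / 2)).sub ((hasDerivAt_id a).mul_const x₂)).congr_deriv (by ring)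
  have h1' : deriv (fun y : ℝ => y ^ 2 / 2 - x₁ * y) = fun y => y - x₁ :=
    funext fun a => (h1 a).deriv
  have h2' : deriv (fun y : ℝ => x₂ ^ 2 / 2 - y * x₂) = fun _ => -x₂ :=
    funext fun a => (h2 a).deriv
  -- θ derivatives
  have ht : HasDerivAt (fun s : ℝ => θ₀ (Real.exp s * x₂)) (d * (Real.exp t * x₂)) t :=
    hθ₀'.comp t ((Real.hasDerivAt_exp t).mul_const x₂)
  have hy : HasDerivAt (fun y : ℝ => θ₀ (Real.exp t * y)) (d * Real.exp t) x₂ := by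
    exact (hθ₀'.comp x₂ ((hasDerivAt_id x₂).const_mul (Real.exp t))).congr_deriv (by ring)
  refine ⟨?_, ?_, ?_, ?_, ?_⟩
  · rw [(h1 x₂).deriv]; ring
  · rw [(h2 x₁).deriv]
  · rw [h1', h2', deriv_const]
    have : deriv (fun y : ℝ => y - x₁) x₂ = 1 := by
      simpa using ((hasDerivAt_id x₂).sub_const x₁).deriv
    rw [this]; norm_num
  · simp
  · rw [ht.deriv, hy.deriv, deriv_const]; simp only []; ring
end

section
/- Let ω₀, θ₀ : ℝ → ℝ be C¹ and let Φ : (0,∞) × [0,∞) → ℝ be C² in x₂ and C¹ in t with ∂²_{x₂}Φ(x₂,t) = ω₀(e^t x₂). Then the functions ψ(x,t) = Φ(x₂,t) - x₁x₂, u(x,t) = (x₁ - ∂_{x₂}Φ(x₂,t), -x₂), ω(x,t) = ω₀(e^t x₂), θ(x,t) = θ₀(e^t x₂) satisfy the 2D Boussinesq equations on {x₂ > 0} × (0,∞): u = ∇^⊥ψ, Δψ = ω, ∂_t ω + u·∇ω = ∂_{x₁}θ, and ∂_t θ + u·∇θ = 0. -/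
open Set

/-- General family of explicit Boussinesq solutions in a moving domain: if
`∂₂²Φ(x₂,t) = ω₀(eᵗ x₂)`, then `ψ = Φ(x₂,t) - x₁x₂`, `u = (x₁ - ∂₂Φ, -x₂)`,
`ω = ω₀(eᵗ x₂)`, `θ = θ₀(eᵗ x₂)` solve the 2D Boussinesq equations on
`{x₂ > 0} × (0,∞)`. -/
theorem boussinesq_moving_domain_family
    (ω₀ θ₀ : ℝ → ℝ) (hω₀ : ContDiff ℝ 1 ω₀) (hθ₀ : ContDiff ℝ 1 θ₀)
    (Φ : ℝ → ℝ → ℝ)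
    (hΦx : ∀ t : ℝ, 0 ≤ t → ContDiffOn ℝ 2 (fun y => Φ y t) (Ioi 0))
    (hΦt : ∀ x₂ : ℝ, 0 < x₂ → ContDiffOn ℝ 1 (fun s => Φ x₂ s) (Ici 0))
    (hΦ'' : ∀ x₂ t : ℝ, 0 < x₂ → 0 ≤ t →
      deriv (deriv (fun y => Φ y t)) x₂ = ω₀ (Real.exp t * x₂))
    (ψ u₁ u₂ ω θ : ℝ → ℝ → ℝ → ℝ)
    (hψ : ψ = fun x₁ x₂ t => Φ x₂ t - x₁ * x₂)
    (hu₁ : u₁ = fun x₁ x₂ t => x₁ - deriv (fun y => Φ y t) x₂)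
    (hu₂ : u₂ = fun _x₁ x₂ _t => -x₂)
    (hω : ω = fun _x₁ x₂ t => ω₀ (Real.exp t * x₂))
    (hθ : θ = fun _x₁ x₂ t => θ₀ (Real.exp t * x₂)) :
    ∀ x₁ x₂ t : ℝ, 0 < x₂ → 0 < t →
      -- u = ∇^⊥ψ
      (u₁ x₁ x₂ t = -deriv (fun y => ψ x₁ y t) x₂) ∧
      (u₂ x₁ x₂ t = deriv (fun y => ψ y x₂ t) x₁) ∧
      -- Δψ = ω
      (deriv (deriv (fun y => ψ y x₂ t)) x₁
        + deriv (deriv (fun y => ψ x₁ y t)) x₂ = ω x₁ x₂ t) ∧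
      -- ∂ₜω + u·∇ω = ∂₁θ
      (deriv (fun s => ω x₁ x₂ s) t
        + u₁ x₁ x₂ t * deriv (fun y => ω y x₂ t) x₁
        + u₂ x₁ x₂ t * deriv (fun y => ω x₁ y t) x₂
        = deriv (fun y => θ y x₂ t) x₁) ∧
      -- ∂ₜθ + u·∇θ = 0
      (deriv (fun s => θ x₁ x₂ s) t
        + u₁ x₁ x₂ t * deriv (fun y => θ y x₂ t) x₁
        + u₂ x₁ x₂ t * deriv (fun y => θ x₁ y t) x₂ = 0) := by

  intro x₁ x₂ t hx ht
  subst hψ hu₁ hu₂ hω hθ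
  -- differentiability of Φ(·,t) on Ioi 0
  have hdiffOn : ∀ y : ℝ, 0 < y → DifferentiableAt ℝ (fun z => Φ z t) y := fun y hy =>
    (((hΦx t ht.le).differentiableOn (by norm_num)) y hy).differentiableAt
      (Ioi_mem_nhds hy)
  -- chain-rule derivatives for ω and θ
  have hexp : HasDerivAt (fun s : ℝ => Real.exp s * x₂) (Real.exp t * x₂) t :=
    (Real.hasDerivAt_exp t).mul_const x₂
  have hlin : HasDerivAt (fun y : ℝ => Real.exp t * y) (Real.exp t) x₂ := by
    simpa using (hasDerivAt_id x₂).const_mul (Real.exp t)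
  have hω₀d : ∀ z : ℝ, HasDerivAt ω₀ (deriv ω₀ z) z := fun z =>
    (hω₀.differentiable (by norm_num) z).hasDerivAt
  have hθ₀d : ∀ z : ℝ, HasDerivAt θ₀ (deriv θ₀ z) z := fun z =>
    (hθ₀.differentiable (by norm_num) z).hasDerivAt
  have hωt : deriv (fun s => ω₀ (Real.exp s * x₂)) t
      = deriv ω₀ (Real.exp t * x₂) * (Real.exp t * x₂) :=
    ((hω₀d _).comp t hexp).deriv
  have hθt : deriv (fun s => θ₀ (Real.exp s * x₂)) t
      = deriv θ₀ (Real.exp t * x₂) * (Real.exp t * x₂) :=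
    ((hθ₀d _).comp t hexp).deriv
  have hωx : deriv (fun y => ω₀ (Real.exp t * y)) x₂
      = deriv ω₀ (Real.exp t * x₂) * Real.exp t :=
    ((hω₀d _).comp x₂ hlin).deriv
  have hθx : deriv (fun y => θ₀ (Real.exp t * y)) x₂
      = deriv θ₀ (Real.exp t * x₂) * Real.exp t :=
    ((hθ₀d _).comp x₂ hlin).deriv
  -- ∂₂ψ at points of Ioi 0
  have hpsi2 : ∀ y : ℝ, 0 < y →
      deriv (fun z => Φ z t - x₁ * z) y = deriv (fun z => Φ z t) y - x₁ := by
    intro y hy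
    have h := ((hdiffOn y hy).hasDerivAt.fun_sub ((hasDerivAt_id y).const_mul x₁)).deriv
    simpa using h
  refine ⟨?_, ?_, ?_, ?_, ?_⟩
  · rw [hpsi2 x₂ hx]; ring
  · have : deriv (fun y => Φ x₂ t - y * x₂) x₁ = -x₂ := by
      rw [deriv_fun_sub (by fun_prop) (by fun_prop)]
      simp
    rw [this]
  · have h1 : deriv (deriv (fun y => Φ x₂ t - y * x₂)) x₁ = 0 := by
      have : (deriv (fun y => Φ x₂ t - y * x₂)) = fun _ => -x₂ := by
        funext y
        rw [deriv_fun_sub (by fun_prop) (by fun_prop)]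
        simp
      rw [this, deriv_const]
    have heq : (fun y => deriv (fun z => Φ z t - x₁ * z) y)
        =ᶠ[nhds x₂] (fun y => deriv (fun z => Φ z t) y - x₁) := by
      filter_upwards [Ioi_mem_nhds hx] with y hy using hpsi2 y hy
    have h2 : deriv (deriv (fun z => Φ z t - x₁ * z)) x₂
        = ω₀ (Real.exp t * x₂) := by
      rw [heq.deriv_eq]
      rw [deriv_sub_const]
      exact hΦ'' x₂ t hx ht.le
    rw [h1, h2, zero_add]
  · simp only [deriv_const]
    rw [hωt, hωx]
    ring
  · simp only [deriv_const]
    rw [hθt, hθx]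
    ring
end

section
/- The explicit functions ψ(x,t) = (1/6)x₂³ e^t - x₁x₂, u(x,t) = (x₁ - (1/2)x₂² e^t, -x₂), ω(x,t) = x₂ e^t, θ(x,t) = x₂ e^t form a smooth global solution of the 2D Boussinesq equations on ℝ² × (0,∞): u = ∇^⊥ψ, Δψ = ω, ∂_t ω + u·∇ω = ∂_{x₁}θ, ∂_t θ + u·∇θ = 0. Moreover |∇ω(x,t)| = |∇θ(x,t)| = e^t for all x and t, so the gradients of both the vorticity and the scalar grow exponentially in time. -/
open Set

/-- The explicit functions `ψ = x₂³eᵗ/6 - x₁x₂`, `u = (x₁ - x₂²eᵗ/2, -x₂)`,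
`ω = θ = x₂eᵗ` form a smooth global solution of the 2D Boussinesq equations on
`ℝ² × (0,∞)`, and `|∇ω| = |∇θ| = eᵗ`: exponential gradient growth. -/
theorem boussinesq_explicit_exponential_growth
    (ψ u₁ u₂ ω θ : ℝ → ℝ → ℝ → ℝ)
    (hψ : ψ = fun x₁ x₂ t => (1 / 6) * x₂ ^ 3 * Real.exp t - x₁ * x₂)
    (hu₁ : u₁ = fun x₁ x₂ t => x₁ - (1 / 2) * x₂ ^ 2 * Real.exp t)
    (hu₂ : u₂ = fun _x₁ x₂ _t => -x₂)
    (hω : ω = fun _x₁ x₂ t => x₂ * Real.exp t)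
    (hθ : θ = fun _x₁ x₂ t => x₂ * Real.exp t) :
    ∀ x₁ x₂ t : ℝ, 0 < t →
      -- u = ∇^⊥ψ
      (u₁ x₁ x₂ t = -deriv (fun y => ψ x₁ y t) x₂) ∧
      (u₂ x₁ x₂ t = deriv (fun y => ψ y x₂ t) x₁) ∧
      -- Δψ = ω
      (deriv (deriv (fun y => ψ y x₂ t)) x₁
        + deriv (deriv (fun y => ψ x₁ y t)) x₂ = ω x₁ x₂ t) ∧
      -- ∂ₜω + u·∇ω = ∂₁θ
      (deriv (fun s => ω x₁ x₂ s) t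
        + u₁ x₁ x₂ t * deriv (fun y => ω y x₂ t) x₁
        + u₂ x₁ x₂ t * deriv (fun y => ω x₁ y t) x₂
        = deriv (fun y => θ y x₂ t) x₁) ∧
      -- ∂ₜθ + u·∇θ = 0
      (deriv (fun s => θ x₁ x₂ s) t
        + u₁ x₁ x₂ t * deriv (fun y => θ y x₂ t) x₁
        + u₂ x₁ x₂ t * deriv (fun y => θ x₁ y t) x₂ = 0) ∧
      -- |∇ω| = eᵗ
      (Real.sqrt ((deriv (fun y => ω y x₂ t) x₁) ^ 2
        + (deriv (fun y => ω x₁ y t) x₂) ^ 2) = Real.exp t) ∧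
      -- |∇θ| = eᵗ
      (Real.sqrt ((deriv (fun y => θ y x₂ t) x₁) ^ 2
        + (deriv (fun y => θ x₁ y t) x₂) ^ 2) = Real.exp t) := by
  subst hψ hu₁ hu₂ hω hθ
  intro x₁ x₂ t ht
  -- derivative of ψ in x₁ (at any point a)
  have dψ1 : ∀ a : ℝ, deriv (fun y : ℝ => (1/6) * x₂ ^ 3 * Real.exp t - y * x₂) a = -x₂ := by
    intro a
    have h : HasDerivAt (fun y : ℝ => (1/6) * x₂ ^ 3 * Real.exp t - y * x₂) (-x₂) a := by
      simpa using (((hasDerivAt_id a).mul_const x₂).const_sub ((1/6) * x₂ ^ 3 * Real.exp t))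
    exact h.deriv
  -- derivative of ψ in x₂ (at any point b)
  have dψ2 : ∀ b : ℝ, deriv (fun y : ℝ => (1/6) * y ^ 3 * Real.exp t - x₁ * y) b
      = (1/2) * b ^ 2 * Real.exp t - x₁ := by
    intro b
    have h : HasDerivAt (fun y : ℝ => (1/6) * y ^ 3 * Real.exp t - x₁ * y)
        ((1/2) * b ^ 2 * Real.exp t - x₁) b := by
      have h1 : HasDerivAt (fun y : ℝ => (1/6) * y ^ 3 * Real.exp t)
          ((1/2) * b ^ 2 * Real.exp t) b := by
        have := ((hasDerivAt_pow 3 b).const_mul ((1:ℝ)/6)).mul_const (Real.exp t)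
        refine this.congr_deriv ?_
        norm_num; ring
      exact (h1.sub ((hasDerivAt_id b).const_mul x₁)).congr_deriv (by ring)
    exact h.deriv
  have dω1 : ∀ a : ℝ, deriv (fun _y : ℝ => x₂ * Real.exp t) a = 0 := fun a => deriv_const a _
  have dω2 : ∀ b : ℝ, deriv (fun y : ℝ => y * Real.exp t) b = Real.exp t := by
    intro b
    simpa using ((hasDerivAt_id b).mul_const (Real.exp t)).deriv
  have dωt : deriv (fun s : ℝ => x₂ * Real.exp s) t = x₂ * Real.exp t := by
    simpa using ((Real.hasDerivAt_exp t).const_mul x₂).deriv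
  have hdd1 : deriv (deriv (fun y : ℝ => (1/6) * x₂ ^ 3 * Real.exp t - y * x₂)) x₁ = 0 := by
    have : deriv (fun y : ℝ => (1/6) * x₂ ^ 3 * Real.exp t - y * x₂) = fun _ => -x₂ := by
      funext a; exact dψ1 a
    rw [this]; simp
  have hdd2 : deriv (deriv (fun y : ℝ => (1/6) * y ^ 3 * Real.exp t - x₁ * y)) x₂
      = x₂ * Real.exp t := by
    have : deriv (fun y : ℝ => (1/6) * y ^ 3 * Real.exp t - x₁ * y)
        = fun b => (1/2) * b ^ 2 * Real.exp t - x₁ := by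
      funext b; exact dψ2 b
    rw [this]
    have h : HasDerivAt (fun b : ℝ => (1/2) * b ^ 2 * Real.exp t - x₁)
        (x₂ * Real.exp t) x₂ := by
      have := (((hasDerivAt_pow 2 x₂).const_mul ((1:ℝ)/2)).mul_const (Real.exp t)).sub_const x₁
      refine this.congr_deriv ?_
      norm_num; ring
    exact h.deriv
  refine ⟨?_, ?_, ?_, ?_, ?_, ?_, ?_⟩
  · rw [dψ2 x₂]; ring
  · rw [dψ1 x₁]
  · rw [hdd1, hdd2]; ring
  · rw [dωt, dω1, dω2]; ring
  · rw [dωt, dω1, dω2]; ring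
  · rw [dω1, dω2]
    rw [show (0:ℝ)^2 + Real.exp t ^ 2 = Real.exp t ^ 2 by ring]
    exact Real.sqrt_sq (Real.exp_pos t).le
  · rw [dω1, dω2]
    rw [show (0:ℝ)^2 + Real.exp t ^ 2 = Real.exp t ^ 2 by ring]
    exact Real.sqrt_sq (Real.exp_pos t).le
end

section
/- The explicit functions ψ(x,t) = (1 - (2/3)e^t(e^t-1)x₂) x₂²/2 - x₁x₂, u(x,t) = (-x₂ + e^t(e^t-1)x₂² + x₁, -x₂), ω(x,t) = 1 - 2x₂ e^t(e^t-1), ρ(x,t) = x₂ e^t form a solution of the modified 2D Boussinesq system on {x₂ > 0} × (0,∞): u = ∇^⊥ψ, Δψ = ω, ∂_t ω + u·∇ω = -∂_{x₂}(ρ²), and ∂_t ρ + u·∇ρ = 0. Moreover |∂_{x₂}ρ(x,t)| = e^t and |∂_{x₂}ω(x,t)| = 2e^t(e^t-1), so the gradients of ρ and ω grow exponentially in time. -/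
open Set

/-- The explicit functions `ψ = (1 - (2/3)eᵗ(eᵗ-1)x₂)x₂²/2 - x₁x₂`,
`u = (-x₂ + eᵗ(eᵗ-1)x₂² + x₁, -x₂)`, `ω = 1 - 2x₂eᵗ(eᵗ-1)`, `ρ = x₂eᵗ` solve the
modified 2D Boussinesq system on `{x₂ > 0} × (0,∞)`, with `|∂₂ρ| = eᵗ` and
`|∂₂ω| = 2eᵗ(eᵗ-1)`: exponential gradient growth. -/
theorem modified_boussinesq_explicit_solution
    (ψ u₁ u₂ ω ρ : ℝ → ℝ → ℝ → ℝ)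
    (hψ : ψ = fun x₁ x₂ t =>
      (1 - (2 / 3) * Real.exp t * (Real.exp t - 1) * x₂) * x₂ ^ 2 / 2 - x₁ * x₂)
    (hu₁ : u₁ = fun x₁ x₂ t => -x₂ + Real.exp t * (Real.exp t - 1) * x₂ ^ 2 + x₁)
    (hu₂ : u₂ = fun _x₁ x₂ _t => -x₂)
    (hω : ω = fun _x₁ x₂ t => 1 - 2 * x₂ * Real.exp t * (Real.exp t - 1))
    (hρ : ρ = fun _x₁ x₂ t => x₂ * Real.exp t) :
    ∀ x₁ x₂ t : ℝ, 0 < x₂ → 0 < t →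
      -- u = ∇^⊥ψ
      (u₁ x₁ x₂ t = -deriv (fun y => ψ x₁ y t) x₂) ∧
      (u₂ x₁ x₂ t = deriv (fun y => ψ y x₂ t) x₁) ∧
      -- Δψ = ω
      (deriv (deriv (fun y => ψ y x₂ t)) x₁
        + deriv (deriv (fun y => ψ x₁ y t)) x₂ = ω x₁ x₂ t) ∧
      -- ∂ₜω + u·∇ω = -∂₂(ρ²)
      (deriv (fun s => ω x₁ x₂ s) t
        + u₁ x₁ x₂ t * deriv (fun y => ω y x₂ t) x₁
        + u₂ x₁ x₂ t * deriv (fun y => ω x₁ y t) x₂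
        = -deriv (fun y => (ρ x₁ y t) ^ 2) x₂) ∧
      -- ∂ₜρ + u·∇ρ = 0
      (deriv (fun s => ρ x₁ x₂ s) t
        + u₁ x₁ x₂ t * deriv (fun y => ρ y x₂ t) x₁
        + u₂ x₁ x₂ t * deriv (fun y => ρ x₁ y t) x₂ = 0) ∧
      -- exponential gradient growth
      (|deriv (fun y => ρ x₁ y t) x₂| = Real.exp t) ∧
      (|deriv (fun y => ω x₁ y t) x₂| = 2 * Real.exp t * (Real.exp t - 1)) := by
  subst hψ hu₁ hu₂ hω hρ
  intro x₁ x₂ t hx ht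
  set E := Real.exp t with hE
  have hEpos : 0 < E := Real.exp_pos t
  have hE1 : 1 ≤ E := by
    rw [hE]; calc (1:ℝ) = Real.exp 0 := (Real.exp_zero).symm
    _ ≤ Real.exp t := Real.exp_le_exp.mpr ht.le
  -- ∂₂ψ at any point y
  have hψ₂ : ∀ y : ℝ, HasDerivAt (fun y => (1 - 2 / 3 * E * (E - 1) * y) * y ^ 2 / 2 - x₁ * y)
      (y - E * (E - 1) * y ^ 2 - x₁) y := by
    intro y
    have h := ((((hasDerivAt_id y).const_mul (2 / 3 * E * (E - 1))).const_sub 1).mul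
      (hasDerivAt_pow 2 y)).div_const 2 |>.sub ((hasDerivAt_id y).const_mul x₁)
    refine h.congr_deriv ?_
    simp only [id_eq]
    push_cast
    ring
  -- ∂₁ψ at any point y
  have hψ₁ : ∀ y : ℝ, HasDerivAt
      (fun y => (1 - 2 / 3 * E * (E - 1) * x₂) * x₂ ^ 2 / 2 - y * x₂) (-x₂) y := by
    intro y
    have h := ((hasDerivAt_id y).mul_const x₂).const_sub
      ((1 - 2 / 3 * E * (E - 1) * x₂) * x₂ ^ 2 / 2)
    refine h.congr_deriv ?_
    ring
  have hd₂ : deriv (fun y => (1 - 2 / 3 * E * (E - 1) * y) * y ^ 2 / 2 - x₁ * y)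
      = fun y => y - E * (E - 1) * y ^ 2 - x₁ := funext fun y => (hψ₂ y).deriv
  have hd₁ : deriv (fun y => (1 - 2 / 3 * E * (E - 1) * x₂) * x₂ ^ 2 / 2 - y * x₂)
      = fun _ => -x₂ := funext fun y => (hψ₁ y).deriv
  -- second derivative in x₂
  have hψ₂₂ : HasDerivAt (fun y => y - E * (E - 1) * y ^ 2 - x₁)
      (1 - 2 * x₂ * E * (E - 1)) x₂ := by
    have h := ((hasDerivAt_id x₂).sub ((hasDerivAt_pow 2 x₂).const_mul
      (E * (E - 1)))).sub_const x₁
    refine h.congr_deriv ?_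
    push_cast
    ring
  -- ω derivatives
  have hωt : HasDerivAt (fun s => 1 - 2 * x₂ * Real.exp s * (Real.exp s - 1))
      (-(2 * x₂ * E * (E - 1) + 2 * x₂ * E * E)) t := by
    have h := (((Real.hasDerivAt_exp t).const_mul (2 * x₂)).mul
      ((Real.hasDerivAt_exp t).sub_const 1)).const_sub 1
    exact h
  have hω₂ : HasDerivAt (fun y => 1 - 2 * y * E * (E - 1)) (-(2 * E * (E - 1))) x₂ := by
    have h := ((((hasDerivAt_id x₂).const_mul 2).mul_const E).mul_const (E - 1)).const_sub 1
    refine h.congr_deriv ?_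
    ring
  -- ρ derivatives
  have hρt : HasDerivAt (fun s => x₂ * Real.exp s) (x₂ * E) t := by
    simpa [hE] using (Real.hasDerivAt_exp t).const_mul x₂
  have hρ₂ : HasDerivAt (fun y => y * E) E x₂ := by
    simpa using (hasDerivAt_id x₂).mul_const E
  have hρsq : HasDerivAt (fun y => (y * E) ^ 2) (2 * (x₂ * E) * E) x₂ := by
    have h := ((hasDerivAt_id x₂).mul_const E).pow 2
    refine h.congr_deriv ?_
    simp only [id_eq]
    push_cast
    ring
  refine ⟨?_, ?_, ?_, ?_, ?_, ?_, ?_⟩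
  · rw [(hψ₂ x₂).deriv]; ring
  · rw [(hψ₁ x₁).deriv]
  · rw [hd₁, hd₂, deriv_const, hψ₂₂.deriv]; ring
  · rw [hωt.deriv, hω₂.deriv, hρsq.deriv,
      show (fun y => 1 - 2 * x₂ * E * (E - 1)) = fun _ : ℝ => 1 - 2 * x₂ * E * (E - 1) from rfl,
      deriv_const]
    ring
  · rw [hρt.deriv, hρ₂.deriv, deriv_const]
    ring
  · rw [hρ₂.deriv, abs_of_pos hEpos]
  · rw [hω₂.deriv, abs_neg]
    exact abs_of_nonneg (by nlinarith)
end

section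
/- With the steady velocity u₂(x₂) = -x₂, the oscillating pair ρ(x₂,t) := sin(x₂ e^t), ω(x₂,t) := 1 - (e^t - 1) sin(2x₂ e^t) solves the reduced modified Boussinesq system on {x₂ > 0} × [0,∞): ∂_t ω + u₂ ∂_{x₂}ω = -∂_{x₂}(ρ²) and ∂_t ρ + u₂ ∂_{x₂}ρ = 0. -/
open Set

/-- With steady velocity `u₂(x₂) = -x₂`, the oscillating pair `ρ(x₂,t) = sin(x₂eᵗ)`,
`ω(x₂,t) = 1 - (eᵗ-1)sin(2x₂eᵗ)` solves the reduced modified Boussinesq system on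
`{x₂ > 0} × [0,∞)`. -/
theorem reduced_modified_boussinesq_oscillating
    (u₂ : ℝ → ℝ) (hu₂ : u₂ = fun x₂ => -x₂)
    (ρ ω : ℝ → ℝ → ℝ)
    (hρ : ρ = fun x₂ t => Real.sin (x₂ * Real.exp t))
    (hω : ω = fun x₂ t => 1 - (Real.exp t - 1) * Real.sin (2 * x₂ * Real.exp t)) :
    ∀ x₂ t : ℝ, 0 < x₂ → 0 ≤ t →
      (deriv (fun s => ω x₂ s) t + u₂ x₂ * deriv (fun y => ω y t) x₂
        = -deriv (fun y => (ρ y t) ^ 2) x₂) ∧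
      (deriv (fun s => ρ x₂ s) t + u₂ x₂ * deriv (fun y => ρ y t) x₂ = 0) := by
  subst hu₂ hρ hω
  intro x t hx ht
  have he := Real.hasDerivAt_exp t
  -- time derivative of ω
  have h1 : HasDerivAt (fun s => 1 - (Real.exp s - 1) * Real.sin (2 * x * Real.exp s))
      (0 - (Real.exp t * Real.sin (2 * x * Real.exp t) +
        (Real.exp t - 1) * (Real.cos (2 * x * Real.exp t) * (2 * x * Real.exp t)))) t := by
    have hinner : HasDerivAt (fun s => 2 * x * Real.exp s) (2 * x * Real.exp t) t :=
      he.const_mul (2 * x)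
    have hsin := (Real.hasDerivAt_sin (2 * x * Real.exp t)).comp t hinner
    exact (hasDerivAt_const t (1:ℝ)).sub ((he.sub_const 1).mul hsin)
  -- space derivative of ω
  have h2 : HasDerivAt (fun y => 1 - (Real.exp t - 1) * Real.sin (2 * y * Real.exp t))
      (0 - (Real.exp t - 1) * (Real.cos (2 * x * Real.exp t) * (2 * Real.exp t))) x := by
    have hinner : HasDerivAt (fun y : ℝ => 2 * y * Real.exp t) (2 * Real.exp t) x := by
      have := ((hasDerivAt_id x).const_mul (2:ℝ)).mul_const (Real.exp t)
      simpa using this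
    have hsin := (Real.hasDerivAt_sin (2 * x * Real.exp t)).comp x hinner
    exact (hasDerivAt_const x (1:ℝ)).sub (hsin.const_mul (Real.exp t - 1))
  -- time derivative of ρ
  have h3 : HasDerivAt (fun s => Real.sin (x * Real.exp s))
      (Real.cos (x * Real.exp t) * (x * Real.exp t)) t := by
    have hinner : HasDerivAt (fun s => x * Real.exp s) (x * Real.exp t) t := he.const_mul x
    exact (Real.hasDerivAt_sin (x * Real.exp t)).comp t hinner
  -- space derivative of ρ
  have hinner : HasDerivAt (fun y : ℝ => y * Real.exp t) (Real.exp t) x := by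
    simpa using (hasDerivAt_id x).mul_const (Real.exp t)
  have h4 : HasDerivAt (fun y => Real.sin (y * Real.exp t))
      (Real.cos (x * Real.exp t) * Real.exp t) x := by
    have := (Real.hasDerivAt_sin (x * Real.exp t)).comp x hinner; exact this
  -- space derivative of ρ²
  have h5 : HasDerivAt (fun y => Real.sin (y * Real.exp t) ^ 2)
      (2 * Real.sin (x * Real.exp t) ^ 1 * (Real.cos (x * Real.exp t) * Real.exp t)) x :=
    h4.pow 2
  rw [h1.deriv, h2.deriv, h3.deriv, h4.deriv, h5.deriv]
  constructor
  · have hs : Real.sin (2 * x * Real.exp t)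
        = 2 * Real.sin (x * Real.exp t) * Real.cos (x * Real.exp t) := by
      rw [show 2 * x * Real.exp t = 2 * (x * Real.exp t) by ring, Real.sin_two_mul]
    rw [hs]; ring
  · ring
end
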